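/- arXiv:2111.14476 — 6 statements merged into one kernel-verified Lean document; each statement's English description precedes it below -/
import Mathlib

section
/- Let r₀ = 12^(−1/4) and t₀ = √(11/12). The four points p₁ = (r₀, 0), p₂ = (r₀·e^{2πi/3}, 0), p₃ = (r₀·e^{−2πi/3}, 0), p₄ = (0, t₀) of ℂ × ℝ are pairwise at Korányi distance 1. -/
open Complex Real

/-- The Korányi (Heisenberg) distance on ℂ × ℝ. -/
noncomputable def kd (p q : ℂ × ℝ) : ℝ :=
  ((‖p.1 - q.1‖) ^ 4 +
    (p.2 - q.2 + 2 * (p.1 * (starRingEnd ℂ) q.1).im) ^ 2) ^ ((1 : ℝ) / 4)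

/-! For two points at the same height whose projections lie on a circle of radius `ρ`,
`|z - w|² = 2ρ² - 2 Re(z w̄)` and `Im(z w̄)² = ρ⁴ - Re(z w̄)²`, so the fourth power of their
Korányi distance is `8ρ²(ρ² - Re(z w̄))`. The vertices `r₀, r₀ω, r₀ω̄ = r₀ω²` of the triangle
have `Re(z w̄) = -r₀²/2`, giving `12 r₀⁴ = 1`; from a vertex to the apex `(0, t₀)` the fourth
power of the distance is `r₀⁴ + t₀² = 1/12 + 11/12`. -/

open ComplexConjugate

lemma kd_nonneg (p q : ℂ × ℝ) : 0 ≤ kd p q := Real.rpow_nonneg (by positivity) _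

lemma kd_pow_four (p q : ℂ × ℝ) :
    kd p q ^ 4 = ‖p.1 - q.1‖ ^ 4 + (p.2 - q.2 + 2 * (p.1 * conj q.1).im) ^ 2 := by
  rw [kd, ← Real.rpow_natCast, ← Real.rpow_mul (by positivity)]
  norm_num

lemma kd_eq_one_iff (p q : ℂ × ℝ) : kd p q = 1 ↔ kd p q ^ 4 = 1 :=
  (pow_eq_one_iff_of_nonneg (kd_nonneg p q) four_ne_zero).symm

lemma kd_zero_right_pow_four (z : ℂ) (s t : ℝ) : kd (z, s) (0, t) ^ 4 = ‖z‖ ^ 4 + (s - t) ^ 2 := by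
  simp [kd_pow_four]

lemma kd_pow_four_of_norm_eq {z w : ℂ} {ρ : ℝ} (hz : ‖z‖ = ρ) (hw : ‖w‖ = ρ) (t : ℝ) :
    kd (z, t) (w, t) ^ 4 = 8 * ρ ^ 2 * (ρ ^ 2 - (z * conj w).re) := by
  have hsub : ‖z - w‖ ^ 2 = 2 * ρ ^ 2 - 2 * (z * conj w).re := by
    rw [Complex.sq_norm, Complex.normSq_sub, Complex.normSq_eq_norm_sq,
      Complex.normSq_eq_norm_sq, hz, hw]
    ring
  have him : (z * conj w).im ^ 2 = ρ ^ 4 - (z * conj w).re ^ 2 := by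
    have hnormSq := Complex.normSq_apply (z * conj w)
    rw [map_mul, Complex.normSq_conj, Complex.normSq_eq_norm_sq, Complex.normSq_eq_norm_sq,
      hz, hw] at hnormSq
    linarith
  rw [kd_pow_four, show ‖z - w‖ ^ 4 = (‖z - w‖ ^ 2) ^ 2 by ring, hsub]
  simp only [sub_self, zero_add, mul_pow, him]
  ring

local notation "ω" => Complex.exp (2 * (π : ℂ) * I / 3)

lemma norm_exp_two_pi_I_div_three : ‖ω‖ = 1 := by
  rw [show 2 * (π : ℂ) * I / 3 = ((2 * π / 3 : ℝ) : ℂ) * I by push_cast; ring]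
  exact Complex.norm_exp_ofReal_mul_I _

lemma exp_two_pi_I_div_three_re : (ω).re = -1 / 2 := by
  rw [show 2 * (π : ℂ) * I / 3 = ((π - π / 3 : ℝ) : ℂ) * I by push_cast; ring,
    Complex.exp_ofReal_mul_I_re, Real.cos_pi_sub, Real.cos_pi_div_three]
  norm_num

lemma exp_neg_two_pi_I_div_three : Complex.exp (-(2 * (π : ℂ) * I) / 3) = conj ω := by
  rw [← Complex.exp_conj]
  congr 1
  simp [map_div₀, map_ofNat]

lemma exp_two_pi_I_div_three_sq : ω ^ 2 = conj ω := by
  rw [← exp_neg_two_pi_I_div_three, ← Complex.exp_nat_mul,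
    show -(2 * (π : ℂ) * I) / 3 = ((2 : ℕ) : ℂ) * (2 * π * I / 3) - 2 * π * I by push_cast; ring,
    Complex.exp_sub, Complex.exp_two_pi_mul_I, div_one]

theorem canonical_four_equilateral :
    let r₀ : ℝ := (12 : ℝ) ^ (-(1 : ℝ) / 4)
    let t₀ : ℝ := Real.sqrt (11 / 12)
    let p₁ : ℂ × ℝ := ((r₀ : ℂ), 0)
    let p₂ : ℂ × ℝ := ((r₀ : ℂ) * Complex.exp (2 * (Real.pi : ℂ) * Complex.I / 3), 0)
    let p₃ : ℂ × ℝ := ((r₀ : ℂ) * Complex.exp (-(2 * (Real.pi : ℂ) * Complex.I) / 3), 0)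
    let p₄ : ℂ × ℝ := (0, t₀)
    kd p₁ p₂ = 1 ∧ kd p₁ p₃ = 1 ∧ kd p₁ p₄ = 1 ∧
    kd p₂ p₃ = 1 ∧ kd p₂ p₄ = 1 ∧ kd p₃ p₄ = 1 := by
  intro r₀ t₀ p₁ p₂ p₃ p₄
  have hr₀ : 0 < r₀ := by positivity
  have hr₀4 : r₀ ^ 4 = 1 / 12 := by
    rw [← Real.rpow_natCast, ← Real.rpow_mul (by norm_num)]
    norm_num
  have ht₀ : t₀ ^ 2 = 11 / 12 := Real.sq_sqrt (by norm_num)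
  have side {z w : ℂ} (hz : ‖z‖ = r₀) (hw : ‖w‖ = r₀) (hzw : (z * conj w).re = -(r₀ ^ 2 / 2)) :
      kd (z, 0) (w, 0) = 1 := by
    rw [kd_eq_one_iff, kd_pow_four_of_norm_eq hz hw, hzw]
    linear_combination 12 * hr₀4
  have apex {z : ℂ} (hz : ‖z‖ = r₀) : kd (z, 0) (0, t₀) = 1 := by
    rw [kd_eq_one_iff, kd_zero_right_pow_four, hz]
    linear_combination hr₀4 + ht₀
  have hnorm₁ : ‖(r₀ : ℂ)‖ = r₀ := Complex.norm_of_nonneg hr₀.le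
  have hnorm₂ : ‖(r₀ : ℂ) * ω‖ = r₀ := by simp [hr₀.le, norm_exp_two_pi_I_div_three]
  have hnorm₃ : ‖(r₀ : ℂ) * conj ω‖ = r₀ := by simp [hr₀.le, norm_exp_two_pi_I_div_three]
  simp only [p₁, p₂, p₃, p₄, exp_neg_two_pi_I_div_three]
  refine ⟨side hnorm₁ hnorm₂ ?_, side hnorm₁ hnorm₃ ?_, apex hnorm₁,
    side hnorm₂ hnorm₃ ?_, apex hnorm₂, apex hnorm₃⟩ <;>
    simp [mul_mul_mul_comm _ ω, ← sq ω, exp_two_pi_I_div_three_sq, exp_two_pi_I_div_three_re] <;>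
    ring
end

section
/- Let r₀ = 12^(−1/4). The three points (r₀, 0), (r₀·e^{2πi/3}, 0), (r₀·e^{−2πi/3}, 0) of ℂ × ℝ, lying on the planar circle of radius r₀ centred at the origin, are pairwise at Korányi distance 1. -/
open Complex Real

/-!
For horizontal points `(z, 0)`, `(w, 0)` with `|z| = |w| = r`, put `u = z w̄`. Then
`|z - w|² = 2r² - 2 Re u` and `(Im u)² = r⁴ - (Re u)²`, so the quartic of the Korányi distance
collapses to `8 r² (r² - Re u) = 8 r⁴ (1 - cos θ)`, where `θ` is the angle between `z` and `w`.
For the vertices of the equilateral triangle `cos θ = -1/2`, giving `12 r⁴`, which is `1` for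
`r = 12^(-1/4)`.
-/

open ComplexConjugate

lemma kd_of_normSq_eq {z w : ℂ} (h : normSq z = normSq w) :
    kd (z, 0) (w, 0) = (8 * normSq z * (normSq z - (z * conj w).re)) ^ (1 / 4 : ℝ) := by
  have hnorm : ‖z - w‖ ^ 4 = normSq (z - w) ^ 2 := by rw [normSq_eq_norm_sq]; ring
  have him : (z * conj w).im ^ 2 = normSq z * normSq w - (z * conj w).re ^ 2 := by
    rw [← normSq_conj w, ← normSq_mul, normSq_apply]; ring
  unfold kd
  rw [sub_zero, zero_add, hnorm, normSq_sub]
  congr 1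
  linear_combination 4 * him - (normSq w + 7 * normSq z - 4 * (z * conj w).re) * h

lemma kd_ofReal_mul_exp (r α β : ℝ) :
    kd (r * exp (α * I), 0) (r * exp (β * I), 0) =
      (8 * r ^ 4 * (1 - Real.cos (α - β))) ^ (1 / 4 : ℝ) := by
  have hnormSq (θ : ℝ) : normSq (r * exp (θ * I)) = r ^ 2 := by
    rw [normSq_mul, normSq_ofReal, normSq_eq_norm_sq, norm_exp_ofReal_mul_I]; ring
  have hprod :
      (r * exp (α * I)) * conj (r * exp (β * I)) = (r ^ 2 : ℝ) * exp ((α - β : ℝ) * I) := by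
    rw [map_mul, conj_ofReal, ← exp_conj, map_mul, conj_ofReal, conj_I, mul_neg, ofReal_sub,
      sub_mul, sub_eq_add_neg, Complex.exp_add, ofReal_pow]
    ring
  rw [kd_of_normSq_eq ((hnormSq α).trans (hnormSq β).symm), hnormSq, hprod, re_ofReal_mul,
    exp_ofReal_mul_I_re]
  ring_nf

theorem canonical_three_equilateral :
    let r₀ : ℝ := (12 : ℝ) ^ (-(1 : ℝ) / 4)
    let p₁ : ℂ × ℝ := ((r₀ : ℂ), 0)
    let p₂ : ℂ × ℝ := ((r₀ : ℂ) * Complex.exp (2 * (Real.pi : ℂ) * Complex.I / 3), 0)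
    let p₃ : ℂ × ℝ := ((r₀ : ℂ) * Complex.exp (-(2 * (Real.pi : ℂ) * Complex.I) / 3), 0)
    kd p₁ p₂ = 1 ∧ kd p₁ p₃ = 1 ∧ kd p₂ p₃ = 1 := by
  intro r₀ p₁ p₂ p₃
  have hr : r₀ ^ 4 = 12⁻¹ := by
    rw [show r₀ = 12 ^ (-(1 : ℝ) / 4) from rfl, show -(1 : ℝ) / 4 = -((4 : ℕ) : ℝ)⁻¹ by norm_num,
      rpow_neg (by norm_num), inv_pow, rpow_inv_natCast_pow (by norm_num) (by norm_num)]
  have hcos : Real.cos (2 * π / 3) = -1 / 2 := by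
    rw [show 2 * π / 3 = π - π / 3 by ring, Real.cos_pi_sub, cos_pi_div_three]; ring
  have hkd (α β : ℝ) (h : Real.cos (α - β) = -1 / 2) :
      kd (r₀ * exp (α * I), 0) (r₀ * exp (β * I), 0) = 1 := by
    rw [kd_ofReal_mul_exp, h, hr]; norm_num
  have h₁ : p₁ = (r₀ * exp ((0 : ℝ) * I), 0) := by simp [p₁]
  have h₂ : p₂ = (r₀ * exp ((2 * π / 3 : ℝ) * I), 0) := by simp only [p₂]; push_cast; ring_nf
  have h₃ : p₃ = (r₀ * exp ((-(2 * π / 3) : ℝ) * I), 0) := by simp only [p₃]; push_cast; ring_nf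
  rw [h₁, h₂, h₃]
  refine ⟨hkd _ _ ?_, hkd _ _ ?_, hkd _ _ ?_⟩
  · rw [zero_sub, Real.cos_neg, hcos]
  · rw [zero_sub, neg_neg, hcos]
  · rw [sub_neg_eq_add, ← two_mul, Real.cos_two_mul, hcos]; norm_num
end

section
/- Let r₀ = 12^(−1/4), t₀ = √(11/12), and let S₃ = {(r₀, 0), (r₀·e^{2πi/3}, 0), (r₀·e^{−2πi/3}, 0)} ⊆ ℂ × ℝ. A point p ∈ ℂ × ℝ satisfies d(p, q) = 1 for all q ∈ S₃ (with respect to the Korányi distance d) if and only if p = (0, t₀) or p = (0, −t₀). -/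
/-!
For `‖w‖ = r` the Korányi quartic expands as
`d((z,t),(w,0))⁴ = C(z,t,r) − 4 Re(μ w̄)` with `μ = (|z|² + r² + i t) z`.
At the vertices `r, rζ, rζ̄` of an isosceles triangle (`ζ` unimodular, not real) equal distances
force `Re μ = Re (μ ζ) = Re (μ ζ̄)`, hence `μ = 0`; since `Re (|z|² + r² + i t) > 0` this gives
`z = 0`, and the remaining condition is `r⁴ + t² = 1`. For the canonical triangle `r⁴ = 1/12`.
-/

open Complex Real

open ComplexConjugate

lemma kd_pow_four_mk_zero (z w : ℂ) (t : ℝ) :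
    kd (z, t) (w, 0) ^ 4 = (normSq z + normSq w) ^ 2 + t ^ 2 + 4 * normSq z * normSq w
      - 4 * (((normSq z + normSq w : ℝ) + t * I) * z * conj w).re := by
  rw [kd_pow_four, show ‖z - w‖ ^ 4 = (‖z - w‖ ^ 2) ^ 2 by ring, Complex.sq_norm]
  simp only [normSq_apply, mul_re, mul_im, sub_re, sub_im, add_re, add_im, ofReal_re, ofReal_im,
    I_re, I_im, conj_re, conj_im]
  ring

lemma kd_pow_four_mul_of_normSq_eq_one (z : ℂ) (t r : ℝ) {ζ : ℂ} (hζ : normSq ζ = 1) :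
    kd (z, t) (r * ζ, 0) ^ 4 = (normSq z + r ^ 2) ^ 2 + t ^ 2 + 4 * r ^ 2 * normSq z
      - 4 * r * (((normSq z + r ^ 2 : ℝ) + t * I) * z * conj ζ).re := by
  rw [kd_pow_four_mk_zero, normSq_mul, normSq_ofReal, hζ, map_mul, conj_ofReal,
    mul_left_comm _ (r : ℂ), re_ofReal_mul]
  simp only [mul_one, ← sq]
  ring

lemma eq_zero_of_re_eq_re_mul_of_re_eq_re_mul_conj {ζ μ : ℂ} (hre : ζ.re ≠ 1) (him : ζ.im ≠ 0)
    (h₁ : μ.re = (μ * ζ).re) (h₂ : μ.re = (μ * conj ζ).re) : μ = 0 := by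
  simp only [mul_re, conj_re, conj_im] at h₁ h₂
  have hμre : μ.re = 0 := by
    have : (1 - ζ.re) * μ.re = 0 := by linear_combination (h₁ + h₂) / 2
    exact (mul_eq_zero.mp this).resolve_left (sub_ne_zero.mpr hre.symm)
  have hμim : μ.im = 0 := by
    have : ζ.im * μ.im = 0 := by linear_combination (h₁ - h₂) / 2
    exact (mul_eq_zero.mp this).resolve_left him
  exact Complex.ext hμre hμim

theorem kd_eq_one_isosceles_iff {r : ℝ} (hr : r ≠ 0) {ζ : ℂ} (hζ : normSq ζ = 1)
    (him : ζ.im ≠ 0) (z : ℂ) (t : ℝ) :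
    (kd (z, t) (r, 0) = 1 ∧ kd (z, t) (r * ζ, 0) = 1 ∧ kd (z, t) (r * conj ζ, 0) = 1) ↔
      z = 0 ∧ r ^ 4 + t ^ 2 = 1 := by
  set μ := ((normSq z + r ^ 2 : ℝ) + t * I) * z with hμ
  have h₀ := kd_pow_four_mul_of_normSq_eq_one z t r (map_one normSq)
  have h₁ := kd_pow_four_mul_of_normSq_eq_one z t r hζ
  have h₂ := kd_pow_four_mul_of_normSq_eq_one z t r ((normSq_conj ζ).trans hζ)
  rw [mul_one, map_one, mul_one] at h₀
  rw [conj_conj] at h₂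
  simp only [kd_eq_one_iff, h₀, h₁, h₂, ← hμ]
  constructor
  · rintro ⟨e₀, e₁, e₂⟩
    have hre : ζ.re ≠ 1 := by
      intro h
      rw [normSq_apply, h] at hζ
      exact him (mul_self_eq_zero.mp (by linarith))
    have hμ0 : μ = 0 := eq_zero_of_re_eq_re_mul_of_re_eq_re_mul_conj hre him
      (mul_left_cancel₀ (mul_ne_zero four_ne_zero hr) (by linarith))
      (mul_left_cancel₀ (mul_ne_zero four_ne_zero hr) (by linarith))
    have hA : ((normSq z + r ^ 2 : ℝ) + t * I : ℂ) ≠ 0 := by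
      refine ne_of_apply_ne re ?_
      simp only [add_re, ofReal_re, re_ofReal_mul, I_re, mul_zero, add_zero, zero_re]
      exact (add_pos_of_nonneg_of_pos (normSq_nonneg z) (sq_pos_of_ne_zero hr)).ne'
    have hz : z = 0 := (mul_eq_zero.mp hμ0).resolve_left hA
    subst hz
    refine ⟨rfl, ?_⟩
    simp only [hμ0, map_zero, zero_add, mul_zero, add_zero, zero_re, sub_zero] at e₀
    linear_combination e₀
  · rintro ⟨rfl, h⟩
    simp only [hμ, map_zero, zero_add, mul_zero, zero_mul, zero_re, sub_zero, add_zero, and_self]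
    linear_combination h

theorem equidistant_from_canonical_three (p : ℂ × ℝ) :
    let r₀ : ℝ := (12 : ℝ) ^ (-(1 : ℝ) / 4)
    let t₀ : ℝ := Real.sqrt (11 / 12)
    let S₃ : Set (ℂ × ℝ) :=
      {((r₀ : ℂ), 0), ((r₀ : ℂ) * Complex.exp (2 * (Real.pi : ℂ) * Complex.I / 3), 0),
        ((r₀ : ℂ) * Complex.exp (-(2 * (Real.pi : ℂ) * Complex.I) / 3), 0)}
    ((∀ q ∈ S₃, kd p q = 1) ↔ p = ((0 : ℂ), t₀) ∨ p = ((0 : ℂ), -t₀)) := by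
  intro r₀ t₀ S₃
  obtain ⟨z, t⟩ := p
  have hω : 2 * (π : ℂ) * I / 3 = (2 * π / 3 : ℝ) * I := by push_cast; ring
  have hω_normSq : normSq (exp (2 * π * I / 3)) = 1 := by
    rw [hω, ← Complex.sq_norm, norm_exp_ofReal_mul_I, one_pow]
  have hω_im : (exp (2 * π * I / 3)).im ≠ 0 := by
    rw [hω, exp_ofReal_mul_I_im]
    exact (Real.sin_pos_of_pos_of_lt_pi (by positivity) (by linarith [Real.pi_pos])).ne'
  have hω_conj : exp (-(2 * π * I) / 3) = conj (exp (2 * π * I / 3)) := by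
    rw [← exp_conj]
    simp only [neg_div, map_div₀, map_mul, map_ofNat, conj_ofReal, conj_I, mul_neg]
  have hr₀ : r₀ ^ 4 = 1 / 12 := by
    rw [← Real.rpow_natCast, ← Real.rpow_mul (by norm_num)]
    norm_num
  have ht₀ : t₀ ^ 2 = 11 / 12 := Real.sq_sqrt (by norm_num)
  simp only [S₃, Set.forall_mem_insert, Set.mem_singleton_iff, forall_eq, hω_conj]
  rw [kd_eq_one_isosceles_iff (Real.rpow_pos_of_pos (by norm_num) _).ne' hω_normSq hω_im, hr₀]
  simp only [Prod.mk.injEq, ← and_or_left]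
  rw [← sq_eq_sq_iff_eq_or_eq_neg, ht₀]
  constructor <;> rintro ⟨hz, ht⟩ <;> exact ⟨hz, by linarith⟩
end

section
/- Every set S ⊆ ℂ × ℝ containing the two points (0, −1/2) and (0, 1/2) whose distinct points are pairwise at Korányi distance 1 has at most 4 elements. -/
open Complex Real

/-!
A point at Korányi distance 1 from both (0, ±1/2) has height 0 and |z|⁴ = 3/4. For two such
points z, w at distance 1, writing z w̄ = x + iy and r = |z|², the equation
(2r - 2x)² + 4y² = 1 together with x² + y² = r² forces r x = 5/8 and y² = 11/48. Three such
points a, b, c are then impossible: the imaginary part of (a b̄)(b c̄) = |b|² (a c̄) gives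
5 (y_ab + y_bc) = 6 y_ac, which is incompatible with y_ab², y_bc², y_ac² all equal to 11/48.
-/

open ComplexConjugate

theorem Set.encard_le_two_of_not_three_distinct {α : Type*} {s : Set α}
    (h : ∀ a ∈ s, ∀ b ∈ s, ∀ c ∈ s, a ≠ b → a ≠ c → b ≠ c → False) : s.encard ≤ 2 := by
  by_contra hlt
  obtain ⟨t, hts, ht⟩ := Set.exists_subset_encard_eq (Order.add_one_le_of_lt (not_le.mp hlt))
  obtain ⟨a, b, c, hab, hac, hbc, rfl⟩ := Set.encard_eq_three.mp ht
  exact h a (hts (by simp)) b (hts (by simp)) c (hts (by simp)) hab hac hbc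

theorem Complex.mul_conj_mul_mul_conj (a b c : ℂ) :
    a * conj b * (b * conj c) = normSq b * (a * conj c) := by
  rw [← mul_conj b]; ring

theorem kd_eq_one_iff_s8 (p q : ℂ × ℝ) :
    kd p q = 1 ↔ normSq (p.1 - q.1) ^ 2 + (p.2 - q.2 + 2 * (p.1 * conj q.1).im) ^ 2 = 1 := by
  have hnorm : ‖p.1 - q.1‖ ^ 4 = normSq (p.1 - q.1) ^ 2 := by
    rw [← Complex.sq_norm, ← pow_mul]
  rw [kd, hnorm, one_div, Real.rpow_inv_eq (by positivity) zero_le_one (by norm_num),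
    Real.one_rpow, eq_comm]

theorem exists_eq_horizontal_of_kd_eq_one {p : ℂ × ℝ} (h₁ : kd p (0, -1 / 2) = 1)
    (h₂ : kd p (0, 1 / 2) = 1) : ∃ z : ℂ, p = (z, 0) ∧ normSq z ^ 2 = 3 / 4 := by
  rw [kd_eq_one_iff_s8] at h₁ h₂
  simp only [sub_zero, map_zero, mul_zero, zero_im, add_zero] at h₁ h₂
  have hp : p.2 = 0 := by nlinarith
  refine ⟨p.1, Prod.ext rfl hp, ?_⟩
  rw [hp] at h₁
  linarith

theorem mul_conj_of_kd_horizontal_eq_one {z w : ℂ} (hz : normSq z ^ 2 = 3 / 4)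
    (hw : normSq w ^ 2 = 3 / 4) (h : kd (z, 0) (w, 0) = 1) :
    normSq z * (z * conj w).re = 5 / 8 ∧ (z * conj w).im ^ 2 = 11 / 48 := by
  have hzw : normSq w = normSq z := by
    nlinarith [normSq_nonneg z, normSq_nonneg w]
  have hsq : (z * conj w).re ^ 2 + (z * conj w).im ^ 2 = normSq z ^ 2 := by
    have := normSq_apply (z * conj w)
    rw [normSq_mul, normSq_conj, hzw] at this
    linear_combination -this
  rw [kd_eq_one_iff_s8] at h
  simp only [sub_zero, zero_add, normSq_sub, hzw] at h
  have hre : normSq z * (z * conj w).re = 5 / 8 := by nlinarith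
  refine ⟨hre, ?_⟩
  have hre2 : (z * conj w).re ^ 2 * normSq z ^ 2 = 25 / 64 := by
    linear_combination (normSq z * (z * conj w).re + 5 / 8) * hre
  rw [hz] at hre2 hsq
  linarith

theorem false_of_sq_eq_of_five_mul_add_eq {u v w : ℝ} (hu : u ^ 2 = 11 / 48)
    (hv : v ^ 2 = 11 / 48) (hw : w ^ 2 = 11 / 48) (h : 5 * (u + v) = 6 * w) : False := by
  have huv : u * v = -77 / 1200 := by
    linear_combination ((5 * (u + v) + 6 * w) * h - 25 * hu - 25 * hv + 36 * hw) / 50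
  have : (u * v) ^ 2 = u ^ 2 * v ^ 2 := by ring
  rw [huv, hu, hv] at this
  norm_num at this

theorem false_of_three_kd_horizontal_eq_one {a b c : ℂ} (ha : normSq a ^ 2 = 3 / 4)
    (hb : normSq b ^ 2 = 3 / 4) (hc : normSq c ^ 2 = 3 / 4) (hab : kd (a, 0) (b, 0) = 1)
    (hbc : kd (b, 0) (c, 0) = 1) (hac : kd (a, 0) (c, 0) = 1) : False := by
  obtain ⟨xab, yab⟩ := mul_conj_of_kd_horizontal_eq_one ha hb hab
  obtain ⟨xbc, ybc⟩ := mul_conj_of_kd_horizontal_eq_one hb hc hbc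
  obtain ⟨-, yac⟩ := mul_conj_of_kd_horizontal_eq_one ha hc hac
  have hab' : normSq a = normSq b := by nlinarith [normSq_nonneg a, normSq_nonneg b]
  have him := congrArg im (mul_conj_mul_mul_conj a b c)
  rw [mul_im (a * conj b), im_ofReal_mul] at him
  refine false_of_sq_eq_of_five_mul_add_eq ybc yab yac ?_
  calc 5 * ((b * conj c).im + (a * conj b).im)
      = 8 * (normSq b * (b * conj c).re * (a * conj b).im
          + normSq a * (a * conj b).re * (b * conj c).im) := by rw [xab, xbc]; ring
    _ = 8 * normSq b ^ 2 * (a * conj c).im := by rw [hab']; linear_combination 8 * normSq b * him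
    _ = 6 * (a * conj c).im := by rw [hb]; ring

theorem equilateral_set_containing_vertical_pair (S : Set (ℂ × ℝ))
    (h₁ : ((0 : ℂ), (-1 / 2 : ℝ)) ∈ S) (h₂ : ((0 : ℂ), (1 / 2 : ℝ)) ∈ S)
    (hS : ∀ p ∈ S, ∀ q ∈ S, p ≠ q → kd p q = 1) :
    S.encard ≤ 4 := by
  set V : Set (ℂ × ℝ) := {((0 : ℂ), (-1 / 2 : ℝ)), ((0 : ℂ), (1 / 2 : ℝ))}
  have horizontal : ∀ p ∈ S \ V, ∃ z : ℂ, p = (z, 0) ∧ normSq z ^ 2 = 3 / 4 := by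
    rintro p ⟨hp, hpV⟩
    simp only [V, Set.mem_insert_iff, Set.mem_singleton_iff, not_or] at hpV
    exact exists_eq_horizontal_of_kd_eq_one (hS p hp _ h₁ hpV.1) (hS p hp _ h₂ hpV.2)
  have hV : V.encard ≤ 2 := (Set.encard_pair (by norm_num)).le
  have hSV : (S \ V).encard ≤ 2 := by
    refine Set.encard_le_two_of_not_three_distinct fun p hp q hq r hr hpq hpr hqr => ?_
    obtain ⟨a, rfl, ha⟩ := horizontal p hp
    obtain ⟨b, rfl, hb⟩ := horizontal q hq
    obtain ⟨c, rfl, hc⟩ := horizontal r hr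
    exact false_of_three_kd_horizontal_eq_one ha hb hc (hS _ hp.1 _ hq.1 hpq)
      (hS _ hq.1 _ hr.1 hqr) (hS _ hp.1 _ hr.1 hpr)
  calc S.encard ≤ (S \ V).encard + V.encard := Set.encard_le_encard_sdiff_add_encard S V
    _ ≤ 2 + 2 := add_le_add hSV hV
    _ = 4 := by norm_num
end

section
/- Let θ* = arccos(5/2 − √6) and define f(θ) = (1 + 6·cos θ) / (8·√(cos θ)·cos(θ/2)) for θ ∈ [−θ*, θ*]. Then for all θ ∈ [−θ*, θ*] one has √(5/8) ≤ f(θ) ≤ 1; moreover f attains the value 1 exactly at θ = ±θ* and attains the value √(5/8) exactly at θ = ±arccos(1/4). -/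
open Complex Real

/-!
Write `c = cos θ`. Since `cos² (θ/2) = (1 + c)/2`, the square of `f θ` is the rational
function `(1 + 6c)² / (32 c (1 + c))` of `c`. Its excess over `5/8` is
`(4c - 1)² / (32 c (1 + c))`, and its defect from `1` is
`4 (c - (5/2 - √6)) ((5/2 + √6) - c) / (32 c (1 + c))`. On the interval `c` ranges over
`[5/2 - √6, 1]`, and `cos θ = x` pins `θ` down to `± arccos x`.
-/

namespace KoranyiSphere

noncomputable def fSq (c : ℝ) : ℝ := (1 + 6 * c) ^ 2 / (32 * c * (1 + c))

section fSq

variable {c : ℝ}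

lemma fSq_nonneg (hc : 0 < c) : 0 ≤ fSq c := by
  unfold fSq; positivity

lemma fSq_sub_five_eighths (hc : 0 < c) :
    fSq c - 5 / 8 = (4 * c - 1) ^ 2 / (32 * c * (1 + c)) := by
  unfold fSq; field_simp; ring

lemma one_sub_fSq (hc : 0 < c) :
    1 - fSq c = 4 * (c - (5 / 2 - √6)) * (5 / 2 + √6 - c) / (32 * c * (1 + c)) := by
  have h6 : √6 ^ 2 = 6 := sq_sqrt (by norm_num)
  unfold fSq; field_simp; linear_combination -16 * h6

lemma five_eighths_le_fSq (hc : 0 < c) : 5 / 8 ≤ fSq c := by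
  have := fSq_sub_five_eighths hc
  have : 0 ≤ (4 * c - 1) ^ 2 / (32 * c * (1 + c)) := by positivity
  linarith

lemma fSq_eq_five_eighths_iff (hc : 0 < c) : fSq c = 5 / 8 ↔ c = 1 / 4 := by
  rw [← sub_eq_zero, fSq_sub_five_eighths hc, div_eq_zero_iff]
  have : 32 * c * (1 + c) ≠ 0 := by positivity
  simp only [this, or_false, pow_eq_zero_iff two_ne_zero, sub_eq_zero]
  constructor <;> intro h <;> linarith

lemma fSq_le_one (hlo : 5 / 2 - √6 ≤ c) (hhi : c ≤ 5 / 2 + √6) : fSq c ≤ 1 := by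
  have hc : 0 < c := lt_of_lt_of_le (by nlinarith [sq_sqrt (show (0 : ℝ) ≤ 6 by norm_num)]) hlo
  have := one_sub_fSq hc
  have : 0 ≤ 4 * (c - (5 / 2 - √6)) * (5 / 2 + √6 - c) / (32 * c * (1 + c)) := by
    apply div_nonneg (mul_nonneg (by linarith) (by linarith)); positivity
  linarith

lemma fSq_eq_one_iff (hc : 0 < c) : fSq c = 1 ↔ c = 5 / 2 - √6 ∨ c = 5 / 2 + √6 := by
  rw [eq_comm, ← sub_eq_zero, one_sub_fSq hc, div_eq_zero_iff]
  have : 32 * c * (1 + c) ≠ 0 := by positivity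
  simp only [this, or_false, mul_eq_zero, four_ne_zero, false_or, sub_eq_zero]
  exact or_congr Iff.rfl eq_comm

end fSq

lemma div_cos_half_eq_sqrt_fSq {θ : ℝ} (hl : -π ≤ θ) (hr : θ ≤ π) (hc : 0 ≤ Real.cos θ) :
    (1 + 6 * Real.cos θ) / (8 * √(Real.cos θ) * Real.cos (θ / 2)) = √(fSq (Real.cos θ)) := by
  rw [cos_half hl hr]
  set c := Real.cos θ
  have hden : 8 * √c * √((1 + c) / 2) = √(32 * c * (1 + c)) := by
    rw [show 32 * c * (1 + c) = 8 ^ 2 * c * ((1 + c) / 2) by ring,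
      sqrt_mul (by positivity), sqrt_mul (by positivity), sqrt_sq (by norm_num)]
  rw [hden, fSq, sqrt_div' _ (by positivity), sqrt_sq (by linarith)]

lemma le_cos_of_abs_le_arccos {x θ : ℝ} (hx₁ : -1 ≤ x) (hx₂ : x ≤ 1)
    (h : |θ| ≤ arccos x) : x ≤ Real.cos θ := by
  have := cos_le_cos_of_nonneg_of_le_pi (abs_nonneg θ) (arccos_le_pi x) h
  rwa [cos_arccos hx₁ hx₂, cos_abs] at this

lemma cos_eq_iff_eq_arccos_or_eq_neg_arccos {x θ : ℝ} (hx₁ : -1 ≤ x) (hx₂ : x ≤ 1)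
    (hθ : |θ| ≤ π) : Real.cos θ = x ↔ θ = arccos x ∨ θ = -arccos x := by
  constructor
  · rintro rfl
    rw [← abs_eq (arccos_nonneg _), ← cos_abs, arccos_cos (abs_nonneg θ) hθ]
  · rintro (rfl | rfl) <;> simp only [Real.cos_neg, cos_arccos hx₁ hx₂]

end KoranyiSphere

open KoranyiSphere in
theorem f_range_on_interval :
    let θs : ℝ := Real.arccos (5 / 2 - Real.sqrt 6)
    let f : ℝ → ℝ := fun θ =>
      (1 + 6 * Real.cos θ) / (8 * Real.sqrt (Real.cos θ) * Real.cos (θ / 2))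
    (∀ θ ∈ Set.Icc (-θs) θs, Real.sqrt (5 / 8) ≤ f θ ∧ f θ ≤ 1) ∧
    (∀ θ ∈ Set.Icc (-θs) θs, (f θ = 1 ↔ θ = θs ∨ θ = -θs)) ∧
    (∀ θ ∈ Set.Icc (-θs) θs,
      (f θ = Real.sqrt (5 / 8) ↔ θ = Real.arccos (1 / 4) ∨ θ = -Real.arccos (1 / 4))) := by
  intro θs f
  have h6 : 2 < √6 ∧ √6 < 5 / 2 := by
    constructor <;> nlinarith [sq_sqrt (show (0 : ℝ) ≤ 6 by norm_num), sqrt_nonneg 6]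
  have key : ∀ θ ∈ Set.Icc (-θs) θs,
      |θ| ≤ π ∧ 5 / 2 - √6 ≤ Real.cos θ ∧ 0 < Real.cos θ ∧ f θ = √(fSq (Real.cos θ)) := by
    intro θ hθ
    have hπ : |θ| ≤ π := (abs_le.2 hθ).trans (arccos_le_pi _)
    have hc := le_cos_of_abs_le_arccos (by linarith) (by linarith) (abs_le.2 hθ)
    exact ⟨hπ, hc, by linarith,
      div_cos_half_eq_sqrt_fSq (abs_le.1 hπ).1 (abs_le.1 hπ).2 (by linarith)⟩
  refine ⟨fun θ hθ => ?_, fun θ hθ => ?_, fun θ hθ => ?_⟩ <;>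
    obtain ⟨hπ, hc, hc0, hf⟩ := key θ hθ <;> rw [hf]
  · exact ⟨sqrt_le_sqrt (five_eighths_le_fSq hc0),
      sqrt_le_one.2 (fSq_le_one hc (by linarith [cos_le_one θ]))⟩
  · rw [sqrt_eq_one, fSq_eq_one_iff hc0, or_iff_left (by linarith [cos_le_one θ]),
      cos_eq_iff_eq_arccos_or_eq_neg_arccos (by linarith) (by linarith) hπ]
  · rw [sqrt_inj (fSq_nonneg hc0) (by norm_num), fSq_eq_five_eighths_iff hc0,
      cos_eq_iff_eq_arccos_or_eq_neg_arccos (by norm_num) (by norm_num) hπ]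
end

section
/- Let (z, t) ∈ ℂ × ℝ lie on the unit Korányi sphere, i.e. |z|⁴ + t² = 1, and define j₂(z,t) = (z·(|z|² + i·t), −t), which also lies on the unit Korányi sphere. Then the fourth power of the Korányi distance between (z,t) and j₂(z,t) equals 4·(1 − |z|²)². -/
open Complex Real

open ComplexConjugate

lemma im_mul_conj_mul_self (z c : ℂ) : (z * conj (z * c)).im = -(‖z‖ ^ 2 * c.im) := by
  rw [map_mul, ← mul_assoc, mul_conj, normSq_eq_norm_sq, im_ofReal_mul,
    conj_im, mul_neg]

lemma kd_mul_pow_four (z c : ℂ) (t t' : ℝ) :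
    kd (z, t) (z * c, t') ^ 4 = ‖z‖ ^ 4 * ‖1 - c‖ ^ 4 + (t - t' - 2 * ‖z‖ ^ 2 * c.im) ^ 2 := by
  have hsub : z - z * c = z * (1 - c) := by ring
  rw [kd_pow_four, hsub, norm_mul, im_mul_conj_mul_self]
  ring

lemma sq_norm_one_sub_ofReal_add_mul_I (a b : ℝ) :
    ‖1 - ((a : ℂ) + b * I)‖ ^ 2 = (1 - a) ^ 2 + b ^ 2 := by
  rw [Complex.sq_norm, normSq_apply]
  simp only [sub_re, sub_im, one_re, one_im, add_re, add_im, ofReal_re, ofReal_im,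
    mul_re, mul_im, I_re, I_im]
  ring

theorem symmetric_involution_distance (z : ℂ) (t : ℝ)
    (hsph : (‖z‖) ^ 4 + t ^ 2 = 1) :
    (kd (z, t) (z * ((((‖z‖) ^ 2 : ℝ) : ℂ) + (t : ℂ) * Complex.I), -t)) ^ 4 =
      4 * (1 - (‖z‖) ^ 2) ^ 2 := by
  have hnorm : ‖1 - ((((‖z‖) ^ 2 : ℝ) : ℂ) + (t : ℂ) * I)‖ ^ 2 = 2 * (1 - ‖z‖ ^ 2) := by
    rw [sq_norm_one_sub_ofReal_add_mul_I]
    linear_combination hsph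
  have him : ((((‖z‖) ^ 2 : ℝ) : ℂ) + (t : ℂ) * I).im = t := by simp [sq]
  calc _ = ‖z‖ ^ 4 * (‖1 - ((((‖z‖) ^ 2 : ℝ) : ℂ) + (t : ℂ) * I)‖ ^ 2) ^ 2
          + (2 * t * (1 - ‖z‖ ^ 2)) ^ 2 := by
        rw [kd_mul_pow_four, him]
        ring
    _ = 4 * (1 - ‖z‖ ^ 2) ^ 2 := by
        rw [hnorm]
        linear_combination 4 * (1 - ‖z‖ ^ 2) ^ 2 * hsph
end
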